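/- Integral decay estimate for g_{r²}: let m ≥ 1 be an integer, γ ≥ 0 and α > 0. There is a constant C, depending only on m, γ and α, such that for every r > 0 and every integer j ≥ 1, ∫_0^∞ |g_{r²}(t)| e^{−α 4^{j} r²/t} t^{−γ/2} dt/√t ≤ C r^{−γ} 2^{−j(2m+γ)}. -/

import Mathlib

/-!
For `t > m s`, `g_s(t)` is the `m`-th backward difference with step `s` of `t ^ (-1/2)`, so the
mean value theorem gives `|g_s(t)| ≲ s ^ m t ^ (-(m + 1/2))` once `t > (m + 1) s`. On
`(0, (m + 1) s]` we only use that `g_s` is a combination of translates of `t ^ (-1/2)` whose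
coefficients have absolute values summing to `2 ^ m`.
Put `a = m + γ/2` and `P = α 4 ^ j r ^ 2`. Near zero, `e^{-P/t} ≤ C (t / P) ^ a` makes the
integrand `O(P ^ (-a) t ^ (m - 1/2) |g_s(t)|)`; far away, the integrand is
`O(s ^ m t ^ (-(a + 1)) e^{-P/t})`, and `∫₀^∞ t ^ (-(a + 1)) e^{-P/t} dt = Γ(a) P ^ (-a)`
(substitute `t = 1/u`). Both parts are `O(P ^ (-a) s ^ m)` with `s = r ^ 2`, which is
`C r ^ (-γ) 2 ^ (-j (2m + γ))`.
-/

open MeasureTheory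

noncomputable section

/-- The kernel `g_s(t) = Σ_{k=0}^m binom(m,k)(−1)^k 1_{t > ks} (t − ks)^{−1/2}`. -/
noncomputable def gker (m : ℕ) (s t : ℝ) : ℝ :=
  ∑ k ∈ Finset.range (m + 1), (m.choose k : ℝ) * (-1) ^ k *
    (if (k : ℝ) * s < t then (Real.sqrt (t - (k : ℝ) * s))⁻¹ else 0)

open Set Real

def backDiffRpow (n : ℕ) (a s t : ℝ) : ℝ :=
  ∑ k ∈ Finset.range (n + 1), (n.choose k : ℝ) * ((-1) ^ k * (t - k * s) ^ (-a))

lemma backDiffRpow_succ (n : ℕ) (a s t : ℝ) :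
    backDiffRpow (n + 1) a s t = backDiffRpow n a s t - backDiffRpow n a s (t - s) := by
  rw [backDiffRpow, Finset.sum_choose_succ_mul (fun k _ => (-1) ^ k * (t - k * s) ^ (-a)),
    backDiffRpow, backDiffRpow, sub_eq_add_neg, ← Finset.sum_neg_distrib]
  congr 1
  refine Finset.sum_congr rfl fun k _ => ?_
  rw [show t - ((k + 1 : ℕ) : ℝ) * s = t - s - k * s by push_cast; ring]
  ring

lemma hasDerivAt_backDiffRpow {n : ℕ} {a s t : ℝ} (ht : ∀ k ≤ n, t - k * s ≠ 0) :
    HasDerivAt (backDiffRpow n a s) (-a * backDiffRpow n (a + 1) s t) t := by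
  unfold backDiffRpow
  rw [Finset.mul_sum]
  refine HasDerivAt.fun_sum fun k hk => ?_
  have hk := ht k (Nat.lt_succ_iff.mp (Finset.mem_range.mp hk))
  refine (((((hasDerivAt_id' t).sub_const (k * s)).rpow_const (p := -a) (Or.inl hk)).const_mul
    ((-1) ^ k)).const_mul (n.choose k : ℝ)).congr_deriv ?_
  rw [show -a - 1 = -(a + 1) by ring]
  ring

lemma abs_backDiffRpow_le {s : ℝ} (hs : 0 < s) (n : ℕ) {a t : ℝ} (ha : 0 < a)
    (ht : n * s < t) :
    |backDiffRpow n a s t|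
      ≤ (∏ i ∈ Finset.range n, (a + i)) * s ^ n * (t - n * s) ^ (-(a + n)) := by
  induction n generalizing a t with
  | zero =>
    have ht : 0 < t := by simpa using ht
    simp [backDiffRpow, abs_of_nonneg (rpow_nonneg ht.le _)]
  | succ n ih =>
    push_cast at ht
    have hts : n * s < t - s := by linarith
    set K := (∏ i ∈ Finset.range n, (a + 1 + i)) * s ^ n
    have hderiv : ∀ u ∈ Icc (t - s) t, HasDerivWithinAt (backDiffRpow n a s)
        (-a * backDiffRpow n (a + 1) s u) (Icc (t - s) t) u := by
      refine fun u hu => (hasDerivAt_backDiffRpow fun k hk => ?_).hasDerivWithinAt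
      have : (k : ℝ) * s ≤ n * s := by gcongr
      linarith [hu.1]
    have hbound : ∀ u ∈ Ico (t - s) t, ‖-a * backDiffRpow n (a + 1) s u‖
        ≤ a * (K * (t - s - n * s) ^ (-(a + 1 + n))) := by
      intro u hu
      rw [norm_mul, norm_neg, Real.norm_of_nonneg ha.le, Real.norm_eq_abs]
      refine mul_le_mul_of_nonneg_left ((ih (by linarith) (by linarith [hu.1])).trans ?_) ha.le
      gcongr (K * ?_)
      exact rpow_le_rpow_of_nonpos (by linarith) (by linarith [hu.1]) (by linarith)
    have hmvt := norm_image_sub_le_of_norm_deriv_le_segment' hderiv hbound t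
      ⟨by linarith, le_rfl⟩
    rw [backDiffRpow_succ, ← Real.norm_eq_abs]
    convert hmvt using 1
    rw [Finset.prod_range_succ', show t - s - n * s = t - (n + 1) * s by ring]
    simp only [K, Nat.cast_add, Nat.cast_one, add_assoc, add_comm (1 : ℝ)]
    ring

lemma gker_eq_backDiffRpow {m : ℕ} {s t : ℝ} (hs : 0 ≤ s) (ht : m * s < t) :
    gker m s t = backDiffRpow m (1 / 2) s t := by
  refine Finset.sum_congr rfl fun k hk => ?_
  have hk : (k : ℝ) * s < t :=
    lt_of_le_of_lt (by gcongr; exact_mod_cast Finset.mem_range_succ_iff.mp hk) ht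
  rw [if_pos hk, sqrt_eq_rpow, ← rpow_neg (by linarith), mul_assoc]

def gkerTailConst (m : ℕ) : ℝ :=
  (∏ i ∈ Finset.range m, (1 / 2 + (i : ℝ))) * (m + 1) ^ ((m : ℝ) + 1 / 2)

lemma gkerTailConst_pos (m : ℕ) : 0 < gkerTailConst m := by
  unfold gkerTailConst; positivity

lemma abs_gker_le_of_lt {m : ℕ} {s t : ℝ} (hs : 0 < s) (ht : (m + 1) * s < t) :
    |gker m s t| ≤ gkerTailConst m * s ^ m * t ^ (-((m : ℝ) + 1 / 2)) := by
  have hms : m * s < t := by linarith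
  have ht0 : 0 < t := by nlinarith
  have hm1 : (0 : ℝ) < m + 1 := by positivity
  have hquot : t / (m + 1) ≤ t - m * s := by
    rw [div_le_iff₀ hm1]; nlinarith
  rw [gker_eq_backDiffRpow hs.le hms]
  refine (abs_backDiffRpow_le hs m (by norm_num) hms).trans ?_
  calc _ ≤ (∏ i ∈ Finset.range m, (1 / 2 + (i : ℝ))) * s ^ m *
          (t / (m + 1)) ^ (-(1 / 2 + (m : ℝ))) := by
        gcongr ?_ * ?_
        exact rpow_le_rpow_of_nonpos (by positivity) hquot (by linarith)
    _ = _ := by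
        rw [gkerTailConst, div_rpow ht0.le hm1.le,
          show -(1 / 2 + (m : ℝ)) = -(m + 1 / 2) by ring, rpow_neg hm1.le]
        field_simp

lemma abs_gker_le_sum (m : ℕ) (s t : ℝ) :
    |gker m s t| ≤ ∑ k ∈ Finset.range (m + 1),
      (m.choose k : ℝ) * (if (k : ℝ) * s < t then (√(t - k * s))⁻¹ else 0) := by
  refine (Finset.abs_sum_le_sum_abs _ _).trans (Finset.sum_le_sum fun k _ => ?_)
  rw [abs_mul, abs_mul, abs_pow, abs_neg, abs_one, one_pow, mul_one, Nat.abs_cast]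
  gcongr
  split_ifs <;> simp [abs_of_nonneg (sqrt_nonneg _)]

lemma lintegral_Ioc_inv_sqrt {A : ℝ} (hA : 0 ≤ A) :
    ∫⁻ t in Ioc 0 A, ENNReal.ofReal (√t)⁻¹ = ENNReal.ofReal (2 * √A) := by
  have hint : IntegrableOn (fun t : ℝ => t ^ (-(1 / 2) : ℝ)) (Ioc 0 A) :=
    (intervalIntegrable_iff_integrableOn_Ioc_of_le hA).mp
      (intervalIntegral.intervalIntegrable_rpow' (by norm_num))
  rw [setLIntegral_congr_fun measurableSet_Ioc fun t ht => by
      rw [sqrt_eq_rpow, ← rpow_neg ht.1.le],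
    ← ofReal_integral_eq_lintegral_ofReal hint
      (ae_restrict_of_forall_mem measurableSet_Ioc fun t ht => rpow_nonneg ht.1.le _),
    ← intervalIntegral.integral_of_le hA, integral_rpow (Or.inl (by norm_num)), sqrt_eq_rpow]
  congr 1
  norm_num
  ring

lemma lintegral_Ioc_inv_sqrt_sub_le {c A : ℝ} (hc : 0 ≤ c) (hA : 0 ≤ A) :
    ∫⁻ t in Ioc 0 A, ENNReal.ofReal (if c < t then (√(t - c))⁻¹ else 0)
      ≤ ENNReal.ofReal (2 * √A) := by
  set G := (Ioc 0 A).indicator fun u => ENNReal.ofReal (√u)⁻¹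
  calc _ ≤ ∫⁻ t in Ioc 0 A, G (t - c) := by
        refine setLIntegral_mono' measurableSet_Ioc fun t ht => ?_
        split_ifs with hct
        · simp only [G]
          rw [indicator_of_mem (show t - c ∈ Ioc 0 A from ⟨by linarith, by linarith [ht.2]⟩)]
        · simp
    _ ≤ ∫⁻ t, G (t - c) := setLIntegral_le_lintegral _ _
    _ = ∫⁻ u in Ioc 0 A, ENNReal.ofReal (√u)⁻¹ := by
        rw [lintegral_sub_right_eq_self G c, lintegral_indicator measurableSet_Ioc]
    _ = _ := lintegral_Ioc_inv_sqrt hA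

lemma lintegral_Ioc_abs_gker_le (m : ℕ) {s A : ℝ} (hs : 0 ≤ s) (hA : 0 ≤ A) :
    ∫⁻ t in Ioc 0 A, ENNReal.ofReal |gker m s t| ≤ ENNReal.ofReal (2 ^ m * (2 * √A)) := by
  set f : ℕ → ℝ → ℝ := fun k t => if (k : ℝ) * s < t then (√(t - k * s))⁻¹ else 0
  have hf : ∀ k t, 0 ≤ f k t := fun k t => by simp only [f]; split_ifs <;> positivity
  have hmeas : ∀ k, Measurable fun t => ENNReal.ofReal (f k t) := fun k =>
    (Measurable.ite measurableSet_Ioi (by fun_prop) measurable_const).ennreal_ofReal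
  calc _ ≤ ∫⁻ t in Ioc 0 A, ∑ k ∈ Finset.range (m + 1),
          ENNReal.ofReal (m.choose k) * ENNReal.ofReal (f k t) := by
        refine lintegral_mono fun t => ?_
        simp_rw [← ENNReal.ofReal_mul (Nat.cast_nonneg _)]
        rw [← ENNReal.ofReal_sum_of_nonneg fun k _ => by have := hf k t; positivity]
        exact ENNReal.ofReal_le_ofReal (abs_gker_le_sum m s t)
    _ = ∑ k ∈ Finset.range (m + 1),
          ENNReal.ofReal (m.choose k) * ∫⁻ t in Ioc 0 A, ENNReal.ofReal (f k t) := by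
        rw [lintegral_finsetSum _ fun k _ => (hmeas k).const_mul _]
        simp_rw [lintegral_const_mul _ (hmeas _)]
    _ ≤ ∑ k ∈ Finset.range (m + 1),
          ENNReal.ofReal (m.choose k) * ENNReal.ofReal (2 * √A) := by
        gcongr with k
        exact lintegral_Ioc_inv_sqrt_sub_le (by positivity) hA
    _ = _ := by
        rw [← Finset.sum_mul, ← ENNReal.ofReal_sum_of_nonneg fun k _ => Nat.cast_nonneg _,
          ← ENNReal.ofReal_mul (by positivity), ← Nat.cast_sum, Nat.sum_range_choose]
        push_cast
        rfl

lemma exp_neg_le_factorial_mul_rpow_neg {b x : ℝ} (hb : 0 ≤ b) (hx : 0 < x) :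
    exp (-x) ≤ (⌈b⌉₊).factorial * x ^ (-b) := by
  set N := ⌈b⌉₊
  have key : x ^ b ≤ N.factorial * exp x := by
    have hN : (1 : ℝ) ≤ N.factorial := by exact_mod_cast N.factorial_pos
    rcases le_total x 1 with hx1 | hx1
    · nlinarith [rpow_le_one hx.le hx1 hb, one_le_exp hx.le]
    · calc x ^ b ≤ x ^ (N : ℝ) := rpow_le_rpow_of_exponent_le hx1 (Nat.le_ceil b)
        _ ≤ N.factorial * exp x := by
          rw [rpow_natCast, ← div_le_iff₀' (by positivity)]
          exact Real.pow_div_factorial_le_exp x hx.le N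
  rw [exp_neg, rpow_neg hx.le, ← div_eq_mul_inv, le_div_iff₀ (by positivity),
    inv_mul_le_iff₀ (exp_pos x), mul_comm]
  exact key

lemma lintegral_Ioi_rpow_mul_exp_neg_div {a P : ℝ} (ha : 0 < a) (hP : 0 < P) :
    ∫⁻ t in Ioi 0, ENNReal.ofReal (t ^ (-(a + 1)) * exp (-P / t))
      = ENNReal.ofReal (P ^ (-a) * Gamma a) := by
  have hinv : Inv.inv '' Ioi (0 : ℝ) = Ioi 0 := by
    ext x; simp
  have hint : IntegrableOn (fun u : ℝ => u ^ (a - 1) * exp (-(P * u))) (Ioi 0) := by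
    simpa [rpow_one] using
      integrableOn_rpow_mul_exp_neg_mul_rpow (s := a - 1) (by linarith) one_pos hP
  calc _ = ∫⁻ u in Ioi 0, ENNReal.ofReal (u ^ (a - 1) * exp (-(P * u))) := by
        conv_lhs => rw [← hinv]
        rw [lintegral_image_eq_lintegral_abs_deriv_mul measurableSet_Ioi
          (fun u hu => (hasDerivAt_inv (ne_of_gt hu)).hasDerivWithinAt) inv_injective.injOn]
        refine setLIntegral_congr_fun measurableSet_Ioi fun u (hu : 0 < u) => ?_
        rw [← ENNReal.ofReal_mul (abs_nonneg _), abs_neg, abs_of_pos (by positivity),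
          inv_rpow hu.le, rpow_neg hu.le, inv_inv, div_inv_eq_mul, neg_mul, ← rpow_two,
          ← rpow_neg hu.le, ← mul_assoc, ← rpow_add hu]
        ring_nf
    _ = ENNReal.ofReal (∫ u in Ioi 0, u ^ (a - 1) * exp (-(P * u))) :=
        (ofReal_integral_eq_lintegral_ofReal hint (ae_restrict_of_forall_mem measurableSet_Ioi
          fun u (hu : 0 < u) => by positivity)).symm
    _ = _ := by
        rw [integral_rpow_mul_exp_neg_mul_Ioi ha hP, one_div, inv_rpow hP.le, rpow_neg hP.le]

lemma lintegral_Ioc_abs_gker_mul_exp_le {m : ℕ} (hm : 1 ≤ m) {γ s P A : ℝ} (hγ : 0 ≤ γ)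
    (hs : 0 ≤ s) (hP : 0 < P) (hA : 0 ≤ A) :
    ∫⁻ t in Ioc 0 A, ENNReal.ofReal (|gker m s t| * exp (-P / t) * t ^ (-γ / 2) * (√t)⁻¹)
      ≤ ENNReal.ofReal ((⌈(m : ℝ) + γ / 2⌉₊).factorial * 2 ^ (m + 1) *
          P ^ (-((m : ℝ) + γ / 2)) * A ^ m) := by
  set a : ℝ := m + γ / 2
  set c : ℝ := (⌈a⌉₊).factorial * P ^ (-a) * A ^ ((m : ℝ) - 1 / 2)
  have hm' : (1 : ℝ) ≤ m := by exact_mod_cast hm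
  have hc : 0 ≤ c := by positivity
  have hweight : ∀ t ∈ Ioc 0 A, exp (-P / t) * t ^ (-γ / 2) * (√t)⁻¹ ≤ c := by
    rintro t ⟨ht, htA⟩
    have hexp : exp (-P / t) ≤ (⌈a⌉₊).factorial * P ^ (-a) * t ^ a := by
      have := exp_neg_le_factorial_mul_rpow_neg (b := a) (by positivity) (div_pos hP ht)
      rwa [div_rpow hP.le ht.le, rpow_neg ht.le, div_inv_eq_mul, ← mul_assoc, ← neg_div] at this
    calc exp (-P / t) * t ^ (-γ / 2) * (√t)⁻¹
        ≤ (⌈a⌉₊).factorial * P ^ (-a) * t ^ a * t ^ (-γ / 2) * t ^ (-(1 / 2) : ℝ) := by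
          rw [sqrt_eq_rpow, ← rpow_neg ht.le]; gcongr
      _ = (⌈a⌉₊).factorial * P ^ (-a) * t ^ ((m : ℝ) - 1 / 2) := by
          rw [mul_assoc _ (t ^ a), ← rpow_add ht, mul_assoc, ← rpow_add ht]
          congr 2
          ring
      _ ≤ c := by simp only [c]; gcongr; linarith
  calc _ ≤ ∫⁻ t in Ioc 0 A, ENNReal.ofReal c * ENNReal.ofReal |gker m s t| := by
        refine setLIntegral_mono' measurableSet_Ioc fun t ht => ?_
        rw [← ENNReal.ofReal_mul hc, mul_comm c, mul_assoc, mul_assoc, ← mul_assoc (exp _)]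
        exact ENNReal.ofReal_le_ofReal (mul_le_mul_of_nonneg_left (hweight t ht) (abs_nonneg _))
    _ ≤ ENNReal.ofReal c * ENNReal.ofReal (2 ^ m * (2 * √A)) := by
        rw [lintegral_const_mul' _ _ ENNReal.ofReal_ne_top]
        gcongr
        exact lintegral_Ioc_abs_gker_le m hs hA
    _ = _ := by
        rw [← ENNReal.ofReal_mul hc]
        congr 1
        have hA' : A ^ ((m : ℝ) - 1 / 2) * √A = A ^ m := by
          rw [sqrt_eq_rpow, ← rpow_add' hA (by linarith), ← rpow_natCast]; ring_nf
        rw [← hA']; ring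

lemma lintegral_Ioi_abs_gker_mul_exp_le {m : ℕ} {γ s P : ℝ} (hmγ : 0 < (m : ℝ) + γ / 2)
    (hs : 0 < s) (hP : 0 < P) :
    ∫⁻ t in Ioi ((m + 1) * s),
        ENNReal.ofReal (|gker m s t| * exp (-P / t) * t ^ (-γ / 2) * (√t)⁻¹)
      ≤ ENNReal.ofReal (gkerTailConst m * s ^ m *
          (P ^ (-((m : ℝ) + γ / 2)) * Gamma ((m : ℝ) + γ / 2))) := by
  set a : ℝ := m + γ / 2
  have hK : 0 ≤ gkerTailConst m * s ^ m := by have := gkerTailConst_pos m; positivity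
  calc _ ≤ ∫⁻ t in Ioi ((m + 1) * s), ENNReal.ofReal (gkerTailConst m * s ^ m) *
          ENNReal.ofReal (t ^ (-(a + 1)) * exp (-P / t)) := by
        refine setLIntegral_mono' measurableSet_Ioi fun t (ht : _ < t) => ?_
        have ht0 : 0 < t := lt_trans (by positivity) ht
        have hpow : t ^ (-((m : ℝ) + 1 / 2)) * t ^ (-γ / 2) * t ^ (-(1 / 2) : ℝ)
            = t ^ (-(a + 1)) := by
          rw [← rpow_add ht0, ← rpow_add ht0]
          congr 1
          ring
        rw [← ENNReal.ofReal_mul hK]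
        refine ENNReal.ofReal_le_ofReal ?_
        calc |gker m s t| * exp (-P / t) * t ^ (-γ / 2) * (√t)⁻¹
            ≤ gkerTailConst m * s ^ m * t ^ (-((m : ℝ) + 1 / 2)) * exp (-P / t) *
                t ^ (-γ / 2) * t ^ (-(1 / 2) : ℝ) := by
              rw [sqrt_eq_rpow, ← rpow_neg ht0.le]
              gcongr
              exact abs_gker_le_of_lt hs ht
          _ = gkerTailConst m * s ^ m * (t ^ (-(a + 1)) * exp (-P / t)) := by
              rw [← hpow]
              ring
    _ ≤ ENNReal.ofReal (gkerTailConst m * s ^ m) *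
          ∫⁻ t in Ioi 0, ENNReal.ofReal (t ^ (-(a + 1)) * exp (-P / t)) := by
        rw [lintegral_const_mul' _ _ ENNReal.ofReal_ne_top]
        gcongr
        positivity
    _ = _ := by
        rw [lintegral_Ioi_rpow_mul_exp_neg_div hmγ hP, ← ENNReal.ofReal_mul hK]

lemma exists_lintegral_abs_gker_mul_exp_le {m : ℕ} (hm : 1 ≤ m) {γ : ℝ} (hγ : 0 ≤ γ) :
    ∃ C, 0 < C ∧ ∀ s P : ℝ, 0 < s → 0 < P →
      ∫⁻ t in Ioi 0, ENNReal.ofReal (|gker m s t| * exp (-P / t) * t ^ (-γ / 2) * (√t)⁻¹)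
        ≤ ENNReal.ofReal (C * P ^ (-((m : ℝ) + γ / 2)) * s ^ m) := by
  set a : ℝ := m + γ / 2
  have ha : 0 < a := by
    have : (1 : ℝ) ≤ m := by exact_mod_cast hm
    positivity
  have hK := gkerTailConst_pos m
  have hΓ := Gamma_pos_of_pos ha
  refine ⟨(⌈a⌉₊).factorial * 2 ^ (m + 1) * (m + 1) ^ m + gkerTailConst m * Gamma a,
    by positivity, fun s P hs hP => ?_⟩
  rw [← Ioc_union_Ioi_eq_Ioi (by positivity : 0 ≤ (m + 1) * s)]
  calc _ ≤ _ := lintegral_union_le _ _ _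
    _ ≤ _ := add_le_add (lintegral_Ioc_abs_gker_mul_exp_le hm hγ hs.le hP (by positivity))
        (lintegral_Ioi_abs_gker_mul_exp_le ha hs hP)
    _ = _ := by
        rw [← ENNReal.ofReal_add (by positivity) (by positivity)]
        congr 1
        rw [mul_pow]
        ring

/-- Integral decay estimate: for `m ≥ 1`, `γ ≥ 0` and `α > 0` there is `C = C(m,γ,α)` such
that for every `r > 0` and every integer `j ≥ 1`,
`∫_0^∞ |g_{r²}(t)| e^{−α 4^j r²/t} t^{−γ/2} dt/√t ≤ C r^{−γ} 2^{−j(2m+γ)}`. -/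
theorem gker_integral_decay (m : ℕ) (hm : 1 ≤ m) (γ α : ℝ) (hγ : 0 ≤ γ) (hα : 0 < α) :
    ∃ C : ℝ, 0 < C ∧
      ∀ r : ℝ, 0 < r → ∀ j : ℕ, 1 ≤ j →
        (∫⁻ t in Set.Ioi (0 : ℝ), ENNReal.ofReal
            (|gker m (r ^ 2) t| * Real.exp (-(α * 4 ^ j * r ^ 2) / t) *
              t ^ (-γ / 2) * (Real.sqrt t)⁻¹)) ≤
          ENNReal.ofReal (C * r ^ (-γ) * (2 : ℝ) ^ (-(j : ℝ) * (2 * (m : ℝ) + γ))) := by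
  obtain ⟨C, hC, hbound⟩ := exists_lintegral_abs_gker_mul_exp_le hm hγ
  refine ⟨C * α ^ (-((m : ℝ) + γ / 2)), by positivity, fun r hr j _ => ?_⟩
  refine (hbound (r ^ 2) _ (by positivity) (by positivity)).trans_eq ?_
  have h4 : ((4 : ℝ) ^ j) ^ (-((m : ℝ) + γ / 2)) = 2 ^ (-(j : ℝ) * (2 * m + γ)) := by
    rw [show (4 : ℝ) = 2 ^ (2 : ℝ) by norm_num, ← rpow_natCast, ← rpow_mul two_pos.le,
      ← rpow_mul two_pos.le]
    ring_nf
  have hr2 : (r ^ 2) ^ (-((m : ℝ) + γ / 2)) * (r ^ 2) ^ m = r ^ (-γ) := by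
    rw [← rpow_natCast (r ^ 2), ← rpow_add (by positivity), ← rpow_natCast r 2,
      ← rpow_mul hr.le]
    ring_nf
  rw [mul_rpow (by positivity) (by positivity), mul_rpow hα.le (by positivity), h4, ← hr2]
  ring_nf
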